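/- Let w, v ∈ W_p be such that w·λ ≺ ws·λ. If w·μ ≺ v·μ, then w·λ ≺ vs·λ. -/

import Mathlib

noncomputable section

/-- The real vector space `X ⊗ ℝ`, where `X` is a free abelian group of rank `r`. -/
abbrev Vr (r : ℕ) := Fin r → ℝ

/-- The lattice `X` (identified with `ℤ^r`); its dual lattice `Y` is identified with
the same coordinate lattice via the standard perfect pairing. -/
abbrev Lr (r : ℕ) := Fin r → ℤ

/-- The embedding `X → X ⊗ ℝ`. -/
def toV {r : ℕ} (x : Lr r) : Vr r := fun i => (x i : ℝ)

/-- The perfect pairing `⟨·,·⟩ : X × Y → ℤ`. -/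
def pairZ {r : ℕ} (x y : Lr r) : ℤ := ∑ i, x i * y i

/-- The real extension of the pairing to `(X ⊗ ℝ) × Y → ℝ`. -/
def pairR {r : ℕ} (v : Vr r) (y : Lr r) : ℝ := ∑ i, v i * (y i : ℝ)

/-- The subgroup `ℤI` of `X` generated by a subset `I ⊆ X`. -/
def ZI {r : ℕ} (I : Finset (Lr r)) : AddSubgroup (Lr r) :=
  AddSubgroup.closure (I : Set (Lr r))

/-- The data of a reduced crystallographic root system `Φ ⊆ X` with a fixed positive
system `Φ⁺`, simple roots `Φ_s`, coroots `α∨ ∈ Y`, a prime `p`, and the half-sum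
`ρ ∈ X` of the positive roots. -/
structure ARDatum (r : ℕ) where
  Φ : Finset (Lr r)
  pos : Finset (Lr r)
  simples : Finset (Lr r)
  coroot : Lr r → Lr r
  p : ℕ
  ρ : Lr r
  hp : p.Prime
  root_ne_zero : ∀ α ∈ Φ, α ≠ 0
  pos_sub : pos ⊆ Φ
  simples_sub : simples ⊆ pos
  pos_or_neg : ∀ α ∈ Φ, α ∈ pos ∨ -α ∈ pos
  not_pos_and_neg : ∀ α ∈ pos, -α ∉ pos
  neg_mem : ∀ α ∈ Φ, -α ∈ Φ
  root_coroot_two : ∀ α ∈ Φ, pairZ α (coroot α) = 2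
  reflect_root_mem : ∀ α ∈ Φ, ∀ β ∈ Φ, β - pairZ β (coroot α) • α ∈ Φ
  reflect_coroot_mem : ∀ α ∈ Φ, ∀ β ∈ Φ,
    coroot β - pairZ α (coroot β) • coroot α ∈ coroot '' (Φ : Set (Lr r))
  reduced : ∀ α ∈ Φ, ∀ c : ℤ, c • α ∈ Φ → c = 1 ∨ c = -1
  pos_sum_simples : ∀ β ∈ pos, ∃ c : Lr r → ℕ, β = ∑ α ∈ simples, (c α : ℤ) • α
  two_rho : (2 : ℤ) • ρ = ∑ α ∈ pos, α

namespace ARDatum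

/-- The group of affine transformations of `X ⊗ ℝ`. -/
abbrev G (r : ℕ) := (Vr r) ≃ᵃ[ℝ] (Vr r)

variable {r : ℕ} (D : ARDatum r)

/-- `g` is the affine reflection `s_{α,mp} : v ↦ v − (⟨v,α∨⟩ − mp)·α`. -/
def IsRefl (α : Lr r) (m : ℤ) (g : G r) : Prop :=
  ∀ v : Vr r, g v = v - (pairR v (D.coroot α) - (m : ℝ) * (D.p : ℝ)) • toV α

/-- `g` is the linear reflection `s_α : v ↦ v − ⟨v,α∨⟩·α`. -/
def IsLinRefl (α : Lr r) (g : G r) : Prop := D.IsRefl α 0 g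

/-- `g` is the translation `t_{α,mp} : v ↦ v + mp·α`. -/
def IsTransl (α : Lr r) (m : ℤ) (g : G r) : Prop :=
  ∀ v : Vr r, g v = v + ((m : ℝ) * (D.p : ℝ)) • toV α

/-- The affine Weyl group `W_p`, generated by the `s_α` and the `t_{α,mp}`
for `α ∈ Φ⁺`, `m ∈ ℤ`. -/
def Wp : Subgroup (G r) :=
  Subgroup.closure ({g | ∃ α ∈ D.pos, D.IsLinRefl α g} ∪
    {g | ∃ α ∈ D.pos, ∃ m : ℤ, D.IsTransl α m g})

/-- The finite Weyl group `W`, generated by the `s_α` for `α ∈ Φ⁺`. -/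
def W : Subgroup (G r) :=
  Subgroup.closure {g | ∃ α ∈ D.pos, D.IsLinRefl α g}

/-- The subgroup `W_{I,p}` generated by the `s_α` and `t_{α,mp}` for `α ∈ I`. -/
def WIp (I : Finset (Lr r)) : Subgroup (G r) :=
  Subgroup.closure ({g | ∃ α ∈ I, D.IsLinRefl α g} ∪
    {g | ∃ α ∈ I, ∃ m : ℤ, D.IsTransl α m g})

/-- The subgroup `W_I` of `W` generated by the `s_α` for `α ∈ I`. -/
def WI (I : Finset (Lr r)) : Subgroup (G r) :=
  Subgroup.closure {g | ∃ α ∈ I, D.IsLinRefl α g}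

/-- `g` is a reflection (the reflections of `W_p` are exactly the `s_{α,mp}`). -/
def IsReflection (g : G r) : Prop := ∃ α ∈ D.pos, ∃ m : ℤ, D.IsRefl α m g

/-- The dot action `w·v := w(v+ρ) − ρ`. -/
def dot (g : G r) (v : Vr r) : Vr r := g (v + toV D.ρ) - toV D.ρ

/-- The hyperplane `H_{α,n} = {v : ⟨v+ρ,α∨⟩ = np}`. -/
def Hyp (α : Lr r) (n : ℤ) : Set (Vr r) :=
  {v | pairR (v + toV D.ρ) (D.coroot α) = (n : ℝ) * (D.p : ℝ)}

/-- The complement of the union of all the hyperplanes `H_{α,n}`. -/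
def Reg : Set (Vr r) :=
  {v | ∀ α ∈ D.pos, ∀ n : ℤ, pairR (v + toV D.ρ) (D.coroot α) ≠ (n : ℝ) * (D.p : ℝ)}

/-- The alcove containing `v` (the connected component of `v` in the complement of
the hyperplanes). -/
def alcoveOf (v : Vr r) : Set (Vr r) := connectedComponentIn D.Reg v

/-- `H_{α,n}` contains a wall of `A`, i.e. the interior of `closure A ∩ H_{α,n}`
inside the hyperplane `H_{α,n}` is nonempty. -/
def HasWall (A : Set (Vr r)) (α : Lr r) (n : ℤ) : Prop :=
  ∃ x ∈ closure A ∩ D.Hyp α n, ∃ ε > 0,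
    ∀ y ∈ D.Hyp α n, dist y x < ε → y ∈ closure A

/-- The fundamental alcove `C`. -/
def FundC : Set (Vr r) :=
  {v | ∀ α ∈ D.pos, 0 < pairR (v + toV D.ρ) (D.coroot α) ∧
    pairR (v + toV D.ρ) (D.coroot α) < (D.p : ℝ)}

/-- The closure `C̄` of the fundamental alcove. -/
def FundCBar : Set (Vr r) :=
  {v | ∀ α ∈ D.pos, 0 ≤ pairR (v + toV D.ρ) (D.coroot α) ∧
    pairR (v + toV D.ρ) (D.coroot α) ≤ (D.p : ℝ)}

/-- The region `C_I`. -/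
def CI (I : Finset (Lr r)) : Set (Vr r) :=
  {v | ∀ α ∈ D.pos, α ∈ ZI I → 0 < pairR (v + toV D.ρ) (D.coroot α) ∧
    pairR (v + toV D.ρ) (D.coroot α) < (D.p : ℝ)}

/-- The region `C̄_I`. -/
def CIBar (I : Finset (Lr r)) : Set (Vr r) :=
  {v | ∀ α ∈ D.pos, α ∈ ZI I → 0 ≤ pairR (v + toV D.ρ) (D.coroot α) ∧
    pairR (v + toV D.ρ) (D.coroot α) ≤ (D.p : ℝ)}

/-- `S_p`: the reflections of `W_p` in the walls of the fundamental alcove `C`. -/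
def Sp : Set (G r) :=
  {g | g ∈ D.Wp ∧ ∃ α ∈ D.pos, ∃ m : ℤ, D.IsRefl α m g ∧ D.HasWall D.FundC α m}

/-- One step of the order `⪯` (`↑`): `s_{α,mp}·u ⪯ u` whenever `⟨u+ρ,α∨⟩ ≥ mp`. -/
def UpStep (v u : Vr r) : Prop :=
  ∃ α ∈ D.pos, ∃ m : ℤ, (m : ℝ) * (D.p : ℝ) ≤ pairR (u + toV D.ρ) (D.coroot α) ∧
    v = u - (pairR (u + toV D.ρ) (D.coroot α) - (m : ℝ) * (D.p : ℝ)) • toV α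

/-- The order `⪯` (`↑`): the reflexive-transitive closure of `UpStep`. -/
def Up : Vr r → Vr r → Prop := Relation.ReflTransGen D.UpStep

/-- The strict order `≺`. -/
def Ups (v u : Vr r) : Prop := D.Up v u ∧ v ≠ u

/-- The order `≤`: `v ≤ u` iff `u − v` is a `ℤ≥0`-combination of the simple roots. -/
def Le (v u : Vr r) : Prop :=
  ∃ c : Lr r → ℕ, u - v = ∑ α ∈ D.simples, (c α : ℝ) • toV α

/-- The strict order `<`. -/
def Lt (v u : Vr r) : Prop := D.Le v u ∧ v ≠ u

/-- `X₊ = {ν ∈ X : ⟨ν+ρ,α∨⟩ ≥ 0 for all α ∈ Φ⁺}`, viewed inside `X ⊗ ℝ`. -/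
def XplusR : Set (Vr r) :=
  {v | (∃ ν : Lr r, toV ν = v) ∧ ∀ α ∈ D.pos, 0 ≤ pairR (v + toV D.ρ) (D.coroot α)}

/-- `n_α(v)`: the unique integer with `n_α(v)·p < ⟨v+ρ,α∨⟩ < (n_α(v)+1)·p`
(for `v` on none of the hyperplanes), realised as a floor. -/
def nfl (v : Vr r) (α : Lr r) : ℤ := ⌊pairR (v + toV D.ρ) (D.coroot α) / (D.p : ℝ)⌋

/-- `d(v) = ∑_{α ∈ Φ⁺} n_α(v)`. -/
def dfn (v : Vr r) : ℤ := ∑ α ∈ D.pos, D.nfl v α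

/-- The sublattice `pX` of `X`. -/
def pLat : AddSubgroup (Lr r) where
  carrier := {x | ∃ y : Lr r, x = (D.p : ℤ) • y}
  zero_mem' := ⟨0, by simp⟩
  add_mem' := by rintro a b ⟨y, rfl⟩ ⟨z, rfl⟩; exact ⟨y + z, (smul_add _ _ _).symm⟩
  neg_mem' := by rintro a ⟨y, rfl⟩; exact ⟨-y, (smul_neg _ _).symm⟩

/-- The orbit of `ν + pX` under the dot action of `W_I` on `X/pX`. -/
def dotOrbit (I : Finset (Lr r)) (ν : Lr r) : Set (Lr r ⧸ D.pLat) :=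
  {c | ∃ w ∈ D.WI I, ∃ ν' : Lr r, toV ν' = D.dot w (toV ν) ∧
    c = QuotientAddGroup.mk ν'}

end ARDatum

/-! The order `⪯` only ever moves a point across a hyperplane `H_{β,m}` from below to above, by
the reflection `s_{β,mp} ∈ W_p`. Since `λ` and `μ` both lie in `C̄`, for `u ∈ W_p` the points `u·λ`
and `u·μ` lie in the closure of the same alcove `u·C`; hence if `u·μ` lies strictly below `H_{β,m}`
then `u·λ` lies weakly below it, and `s_{β,mp}·(u·λ) ⪰ u·λ`. So a chain `w·μ ⪯ … ⪯ v·μ` lifts to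
chains `w·λ ⪯ … ⪯ x·λ` and `ws·λ ⪯ … ⪯ xs·λ` with `x·μ = v·μ`, and the stabiliser `{1, s}` of `μ`
forces `x ∈ {v, vs}`; in both cases `w·λ ⪯ vs·λ`. Strictness follows from the regularity of `λ`. -/

section Pairing

variable {r : ℕ}

lemma pairZ_add_left (x y c : Lr r) : pairZ (x + y) c = pairZ x c + pairZ y c :=
  add_dotProduct x y c

lemma pairZ_sub_left (x y c : Lr r) : pairZ (x - y) c = pairZ x c - pairZ y c :=
  sub_dotProduct x y c

lemma pairZ_zsmul_left (n : ℤ) (x c : Lr r) : pairZ (n • x) c = n * pairZ x c :=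
  smul_dotProduct n x c

lemma pairZ_neg_right (x c : Lr r) : pairZ x (-c) = -pairZ x c :=
  dotProduct_neg x c

lemma pairR_add_left (v w : Vr r) (c : Lr r) : pairR (v + w) c = pairR v c + pairR w c :=
  add_dotProduct v w _

lemma pairR_sub_left (v w : Vr r) (c : Lr r) : pairR (v - w) c = pairR v c - pairR w c :=
  sub_dotProduct v w _

lemma pairR_smul_left (a : ℝ) (v : Vr r) (c : Lr r) : pairR (a • v) c = a * pairR v c :=
  smul_dotProduct a v _

lemma pairR_neg_right (v : Vr r) (c : Lr r) : pairR v (-c) = -pairR v c := by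
  simp [pairR]

lemma pairR_sub_zsmul_right (v : Vr r) (c d : Lr r) (n : ℤ) :
    pairR v (c - n • d) = pairR v c - n * pairR v d := by
  simp only [pairR, Finset.mul_sum, ← Finset.sum_sub_distrib]
  refine Finset.sum_congr rfl fun i _ => ?_
  push_cast [Pi.sub_apply, Pi.smul_apply, smul_eq_mul]
  ring

lemma pairR_toV (x c : Lr r) : pairR (toV x) c = pairZ x c := by
  simp [pairR, pairZ, toV]

def pairL (c : Lr r) : Module.Dual ℝ (Vr r) where
  toFun v := pairR v c
  map_add' v w := pairR_add_left v w c
  map_smul' a v := pairR_smul_left a v c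

lemma pairL_apply (c : Lr r) (v : Vr r) : pairL c v = pairR v c := rfl

end Pairing

namespace ARDatum

variable {r : ℕ} {D : ARDatum r}

lemma pairR_root_coroot {α : Lr r} (hα : α ∈ D.Φ) : pairR (toV α) (D.coroot α) = 2 := by
  rw [pairR_toV, D.root_coroot_two α hα]
  norm_num

/-- If `δ∨ = -α∨`, then `s_δ s_α` is the transvection `x ↦ x - ⟨x, α∨⟩ (α + δ)`; it preserves the
finite set `Φ` and has infinite orbit through `α` unless `α + δ = 0`. -/
lemma eq_neg_of_coroot_eq_neg {α δ : Lr r} (hα : α ∈ D.Φ) (hδ : δ ∈ D.Φ)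
    (h : D.coroot δ = -D.coroot α) : δ = -α := by
  set σ := α + δ
  have hαα := D.root_coroot_two α hα
  have hδα : pairZ δ (D.coroot α) = -2 := by
    have := D.root_coroot_two δ hδ
    rw [h, pairZ_neg_right] at this
    omega
  have hσα : pairZ σ (D.coroot α) = 0 := by rw [pairZ_add_left, hαα, hδα]; rfl
  have orbit : ∀ n : ℕ, α - (2 * n : ℤ) • σ ∈ D.Φ := by
    intro n
    induction n with
    | zero => simpa using hα
    | succ n ih =>
      set x := α - (2 * n : ℤ) • σ
      have hxα : pairZ x (D.coroot α) = 2 := by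
        rw [pairZ_sub_left, pairZ_zsmul_left, hσα, hαα]; ring
      have h₁ : x - (2 : ℤ) • α ∈ D.Φ := by simpa [hxα] using D.reflect_root_mem α hα x ih
      have h₁δ : pairZ (x - (2 : ℤ) • α) (D.coroot δ) = 2 := by
        rw [h, pairZ_neg_right, pairZ_sub_left, pairZ_zsmul_left, hxα, hαα]; ring
      have h₂ := D.reflect_root_mem δ hδ _ h₁
      rw [h₁δ] at h₂
      convert h₂ using 1
      simp only [x, σ]
      push_cast
      module
  by_contra hne
  have hσ : σ ≠ 0 := fun h0 => hne (eq_neg_of_add_eq_zero_right h0)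
  have hinj : Function.Injective fun n : ℕ => α - (2 * n : ℤ) • σ := by
    intro a b hab
    have := smul_left_injective ℤ hσ (sub_right_injective hab)
    simpa using this
  exact (Set.infinite_of_injective_forall_mem hinj orbit).not_finite D.Φ.finite_toSet

lemma coroot_neg {α : Lr r} (hα : α ∈ D.Φ) : D.coroot (-α) = -D.coroot α := by
  obtain ⟨δ, hδ, hδα⟩ := D.reflect_coroot_mem α hα α hα
  have hneg : D.coroot δ = -D.coroot α := by
    rw [hδα, D.root_coroot_two α hα]
    module
  rwa [← eq_neg_of_coroot_eq_neg hα hδ hneg]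

lemma IsRefl.apply_apply {α : Lr r} {m : ℤ} {g : G r} (hg : D.IsRefl α m g) (hα : α ∈ D.Φ)
    (ξ : Vr r) : g (g ξ) = ξ := by
  rw [hg, hg, pairR_sub_left, pairR_smul_left, pairR_root_coroot hα]
  module

lemma IsRefl.mul_self {α : Lr r} {m : ℤ} {g : G r} (hg : D.IsRefl α m g) (hα : α ∈ D.Φ) :
    g * g = 1 :=
  AffineEquiv.ext (hg.apply_apply hα)

lemma IsTransl.inv {α : Lr r} {m : ℤ} {g : G r} (hg : D.IsTransl α m g) :
    D.IsTransl α (-m) g⁻¹ := by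
  intro ξ
  rw [← g.apply_symm_apply ξ, AffineEquiv.inv_def, AffineEquiv.symm_apply_apply, hg]
  push_cast
  module

lemma exists_isRefl_mem_Wp {β : Lr r} (hβ : β ∈ D.pos) (m : ℤ) :
    ∃ g ∈ D.Wp, D.IsRefl β m g := by
  have h2 : pairL (D.coroot β) (toV β) = 2 := pairR_root_coroot (D.pos_sub hβ)
  let sβ : G r := (Module.reflection h2).toAffineEquiv
  let tβ : G r := AffineEquiv.constVAdd ℝ (Vr r) (((m : ℝ) * D.p) • toV β)
  refine ⟨tβ * sβ, Subgroup.mul_mem _ ?_ ?_, fun ξ => ?_⟩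
  · exact Subgroup.subset_closure (Or.inr ⟨β, hβ, m, fun ξ => add_comm _ _⟩)
  · refine Subgroup.subset_closure (Or.inl ⟨β, hβ, fun ξ => ?_⟩)
    simp [sβ, Module.reflection_apply, pairL_apply]
  · simp only [tβ, sβ, AffineEquiv.coe_mul, Function.comp_apply, AffineEquiv.constVAdd_apply,
      LinearEquiv.coe_toAffineEquiv, vadd_eq_add]
    rw [Module.reflection_apply, pairL_apply]
    module

def PermutesHyperplanes (D : ARDatum r) (u : G r) : Prop :=
  ∀ β ∈ D.pos, ∃ γ ∈ D.pos, ∃ ε : ℤ, IsUnit ε ∧ ∃ k : ℤ,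
    ∀ ξ : Vr r, pairR (u ξ) (D.coroot β) = ε * pairR ξ (D.coroot γ) + k * D.p

lemma permutesHyperplanes_one : D.PermutesHyperplanes 1 :=
  fun β hβ => ⟨β, hβ, 1, isUnit_one, 0, fun ξ => by simp⟩

lemma PermutesHyperplanes.mul {u v : G r} (hu : D.PermutesHyperplanes u)
    (hv : D.PermutesHyperplanes v) : D.PermutesHyperplanes (u * v) := by
  intro β hβ
  obtain ⟨γ₁, hγ₁, ε₁, hε₁, k₁, h₁⟩ := hu β hβ
  obtain ⟨γ₂, hγ₂, ε₂, hε₂, k₂, h₂⟩ := hv γ₁ hγ₁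
  refine ⟨γ₂, hγ₂, ε₁ * ε₂, ?_, ε₁ * k₂ + k₁, fun ξ => ?_⟩
  · exact hε₁.mul hε₂
  · rw [AffineEquiv.coe_mul, Function.comp_apply, h₁, h₂]
    push_cast
    ring

lemma permutesHyperplanes_of_isLinRefl {α : Lr r} {g : G r} (hα : α ∈ D.pos)
    (hg : D.IsLinRefl α g) : D.PermutesHyperplanes g := by
  intro β hβ
  obtain ⟨δ, hδ, hδβ⟩ := D.reflect_coroot_mem α (D.pos_sub hα) β (D.pos_sub hβ)
  have hgδ : ∀ ξ, pairR (g ξ) (D.coroot β) = pairR ξ (D.coroot δ) := by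
    intro ξ
    rw [hg ξ, hδβ, pairR_sub_zsmul_right, pairR_sub_left, pairR_smul_left, pairR_toV]
    push_cast
    ring
  rcases D.pos_or_neg δ hδ with hpos | hneg
  · exact ⟨δ, hpos, 1, isUnit_one, 0, fun ξ => by simp [hgδ]⟩
  · exact ⟨-δ, hneg, -1, isUnit_one.neg, 0,
      fun ξ => by simp [hgδ, coroot_neg hδ, pairR_neg_right]⟩

lemma permutesHyperplanes_of_isTransl {α : Lr r} {m : ℤ} {g : G r} (hg : D.IsTransl α m g) :
    D.PermutesHyperplanes g := by
  intro β hβ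
  refine ⟨β, hβ, 1, isUnit_one, m * pairZ α (D.coroot β), fun ξ => ?_⟩
  rw [hg ξ, pairR_add_left, pairR_smul_left, pairR_toV]
  push_cast
  ring

lemma permutesHyperplanes_of_mem_Wp {u : G r} (hu : u ∈ D.Wp) : D.PermutesHyperplanes u := by
  induction hu using Subgroup.closure_induction'' with
  | mem g hg =>
    obtain ⟨α, hα, hg⟩ | ⟨α, hα, m, hg⟩ := hg
    · exact permutesHyperplanes_of_isLinRefl hα hg
    · exact permutesHyperplanes_of_isTransl hg
  | inv_mem g hg =>
    obtain ⟨α, hα, hg⟩ | ⟨α, hα, m, hg⟩ := hg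
    · rw [inv_eq_of_mul_eq_one_right (hg.mul_self (D.pos_sub hα))]
      exact permutesHyperplanes_of_isLinRefl hα hg
    · exact permutesHyperplanes_of_isTransl hg.inv
  | one => exact permutesHyperplanes_one
  | mul u v _ _ hu hv => exact hu.mul hv

lemma fundC_subset_fundCBar : D.FundC ⊆ D.FundCBar :=
  fun _ hv α hα => ⟨(hv α hα).1.le, (hv α hα).2.le⟩

lemma dot_add_rho (g : G r) (x : Vr r) : D.dot g x + toV D.ρ = g (x + toV D.ρ) :=
  sub_add_cancel _ _

lemma dot_one (x : Vr r) : D.dot 1 x = x :=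
  add_sub_cancel_right x _

lemma dot_mul (g h : G r) (x : Vr r) : D.dot (g * h) x = D.dot g (D.dot h x) := by
  rw [dot, dot, dot, sub_add_cancel, AffineEquiv.coe_mul, Function.comp_apply]

lemma dot_inv_mul_eq_self {g h : G r} {x : Vr r} (hgh : D.dot g x = D.dot h x) :
    D.dot (g⁻¹ * h) x = x := by
  rw [dot_mul, ← hgh, ← dot_mul, inv_mul_cancel, dot_one]

lemma IsRefl.dot_apply {β : Lr r} {m : ℤ} {t : G r} (ht : D.IsRefl β m t) (x : Vr r) :
    D.dot t x = x - (pairR (x + toV D.ρ) (D.coroot β) - m * D.p) • toV β := by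
  rw [dot, ht]
  abel

lemma IsRefl.dot_dot {β : Lr r} {m : ℤ} {t : G r} (ht : D.IsRefl β m t) (hβ : β ∈ D.Φ)
    (x : Vr r) : D.dot t (D.dot t x) = x := by
  rw [← dot_mul, ht.mul_self hβ, dot_one]

lemma IsRefl.pairR_dot {β : Lr r} {m : ℤ} {t : G r} (ht : D.IsRefl β m t) (hβ : β ∈ D.Φ)
    (x : Vr r) :
    pairR (D.dot t x + toV D.ρ) (D.coroot β) =
      2 * (m * D.p) - pairR (x + toV D.ρ) (D.coroot β) := by
  rw [dot_add_rho, ht, pairR_sub_left, pairR_smul_left, pairR_root_coroot hβ]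
  ring

/-- `u·λ` and `u·μ` lie in the closure of the alcove `u·C`, so `u·λ` cannot lie strictly above a
hyperplane that `u·μ` lies strictly below. -/
lemma pairR_dot_le_of_pairR_dot_lt {lam mu : Vr r} (hlam : lam ∈ D.FundCBar)
    (hmu : mu ∈ D.FundCBar) {u : G r} (hu : u ∈ D.Wp) {β : Lr r} (hβ : β ∈ D.pos) {m : ℤ}
    (h : pairR (D.dot u mu + toV D.ρ) (D.coroot β) < m * D.p) :
    pairR (D.dot u lam + toV D.ρ) (D.coroot β) ≤ m * D.p := by
  obtain ⟨γ, hγ, ε, hε, k, hk⟩ := permutesHyperplanes_of_mem_Wp hu β hβ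
  rw [dot_add_rho, hk] at h ⊢
  have hp : (0 : ℝ) < D.p := mod_cast D.hp.pos
  obtain ⟨hmu₀, hmu₁⟩ := hmu γ hγ
  obtain ⟨hlam₀, hlam₁⟩ := hlam γ hγ
  rcases Int.isUnit_iff.mp hε with rfl | rfl
  · have hkm : k < m := by
      have : (k : ℝ) * D.p < m * D.p := by push_cast at h; linarith
      exact_mod_cast lt_of_mul_lt_mul_right this hp.le
    have : ((k : ℝ) + 1) * D.p ≤ m * D.p :=
      mul_le_mul_of_nonneg_right (mod_cast hkm) hp.le
    push_cast
    linarith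
  · have hkm : k ≤ m := by
      have : (k : ℝ) * D.p < (m + 1) * D.p := by push_cast at h; linarith
      have hkm : (k : ℝ) < m + 1 := lt_of_mul_lt_mul_right this hp.le
      exact Int.lt_add_one_iff.mp (mod_cast hkm)
    have : (k : ℝ) * D.p ≤ m * D.p := mul_le_mul_of_nonneg_right (mod_cast hkm) hp.le
    push_cast
    linarith

lemma upStep_dot_of_le {β : Lr r} (hβ : β ∈ D.pos) {m : ℤ} {t : G r} (ht : D.IsRefl β m t)
    {x : Vr r} (hx : pairR (x + toV D.ρ) (D.coroot β) ≤ m * D.p) : D.UpStep x (D.dot t x) := by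
  refine ⟨β, hβ, m, ?_, (ht.dot_dot (D.pos_sub hβ) x).symm.trans (ht.dot_apply _)⟩
  rw [ht.pairR_dot (D.pos_sub hβ)]
  linarith

lemma UpStep.eq_or_exists {b c : Vr r} (h : D.UpStep b c) :
    b = c ∨ ∃ β ∈ D.pos, ∃ m : ℤ, ∃ t ∈ D.Wp, D.IsRefl β m t ∧
      pairR (b + toV D.ρ) (D.coroot β) < m * D.p ∧ c = D.dot t b := by
  obtain ⟨β, hβ, m, hm, rfl⟩ := h
  obtain ⟨t, htW, ht⟩ := exists_isRefl_mem_Wp hβ m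
  rw [← ht.dot_apply]
  rcases hm.eq_or_lt with heq | hlt
  · left
    rw [ht.dot_apply, ← heq, sub_self, zero_smul, sub_zero]
  · refine Or.inr ⟨β, hβ, m, t, htW, ht, ?_, (ht.dot_dot (D.pos_sub hβ) c).symm⟩
    rw [ht.pairR_dot (D.pos_sub hβ)]
    linarith

lemma exists_up_dot_of_up {lam mu : Vr r} (hlam : lam ∈ D.FundCBar) (hmu : mu ∈ D.FundCBar)
    {b x : Vr r} (hx : D.Up b x) :
    ∃ g ∈ D.Wp, x = D.dot g b ∧
      ∀ u ∈ D.Wp, D.dot u mu = b → D.Up (D.dot u lam) (D.dot (g * u) lam) := by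
  induction hx with
  | refl => exact ⟨1, one_mem _, (dot_one b).symm, fun u _ _ => by rw [one_mul]; exact .refl⟩
  | tail _ hstep ih =>
    obtain ⟨g, hg, rfl, hlift⟩ := ih
    rcases hstep.eq_or_exists with heq | ⟨β, hβ, m, t, ht, htβ, hlt, rfl⟩
    · exact ⟨g, hg, heq.symm, hlift⟩
    · refine ⟨t * g, mul_mem ht hg, (dot_mul t g b).symm, fun u hu hub => ?_⟩
      have hgu : D.dot (g * u) mu = D.dot g b := by rw [dot_mul, hub]
      have hle := pairR_dot_le_of_pairR_dot_lt hlam hmu (mul_mem hg hu) hβ (hgu ▸ hlt)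
      rw [mul_assoc, dot_mul]
      exact Relation.ReflTransGen.tail (hlift u hu hub) (upStep_dot_of_le hβ htβ hle)

end ARDatum

/-- If `w·λ ≺ ws·λ` and `w·μ ≺ v·μ`, then `w·λ ≺ vs·λ`. -/
theorem stmt7 {r : ℕ} (D : ARDatum r)
    (s : ARDatum.G r) (hs : s ∈ D.Sp)
    (lam mu : Lr r) (hlam : toV lam ∈ D.FundC) (hmu : toV mu ∈ D.FundCBar)
    (hmustab : ∀ g ∈ D.Wp, (D.dot g (toV mu) = toV mu ↔ g = 1 ∨ g = s))
    (hlamstab : ∀ g ∈ D.Wp, D.dot g (toV lam) = toV lam → g = 1)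
    (w v : ARDatum.G r) (hw : w ∈ D.Wp) (hv : v ∈ D.Wp)
    (h1 : D.Ups (D.dot w (toV lam)) (D.dot (w * s) (toV lam)))
    (h2 : D.Ups (D.dot w (toV mu)) (D.dot v (toV mu))) :
    D.Ups (D.dot w (toV lam)) (D.dot (v * s) (toV lam)) := by
  obtain ⟨hsW, α, hα, m, hsα, -⟩ := hs
  have hss : s * s = 1 := hsα.mul_self (D.pos_sub hα)
  have hsmu : D.dot s (toV mu) = toV mu := (hmustab s hsW).mpr (Or.inr rfl)
  obtain ⟨g, hg, hvmu, hlift⟩ :=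
    ARDatum.exists_up_dot_of_up (ARDatum.fundC_subset_fundCBar hlam) hmu h2.1
  have hw_up := hlift w hw rfl
  have hws_up := hlift (w * s) (mul_mem hw hsW) (by rw [ARDatum.dot_mul, hsmu])
  have hne : D.dot w (toV lam) ≠ D.dot (v * s) (toV lam) := by
    intro h
    have hvs : v * s = w := inv_mul_eq_one.mp <|
      hlamstab _ (mul_mem (inv_mem (mul_mem hv hsW)) hw) (ARDatum.dot_inv_mul_eq_self h.symm)
    exact h2.2 (by rw [← hvs, ARDatum.dot_mul, hsmu])
  refine ⟨?_, hne⟩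
  have hfix : D.dot ((g * w)⁻¹ * v) (toV mu) = toV mu :=
    ARDatum.dot_inv_mul_eq_self (by rw [ARDatum.dot_mul, ← hvmu])
  rcases (hmustab _ (mul_mem (inv_mem (mul_mem hg hw)) hv)).mp hfix with h | h
  · rw [← inv_mul_eq_one.mp h, mul_assoc]
    exact h1.1.trans hws_up
  · rw [inv_mul_eq_iff_eq_mul.mp h, mul_assoc, hss, mul_one]
    exact hw_up

end
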